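/- If G is a graph of order n ≥ 4 in which at most one vertex has degree ≥ n−2, then for any integer t ≥ 2: γ_R(S(G,t)) ≥ n^{t-2}(2n − 1). -/

import Mathlib

variable {V : Type*}

/-- A Roman dominating function: every vertex with value 0 has a neighbor with value 2. -/
def IsRDF (G : SimpleGraph V) (f : V → Fin 3) : Prop :=
  ∀ v, f v = 0 → ∃ u, G.Adj u v ∧ f u = 2

/-- The weight of a Roman dominating function. -/
def romanWeight [Fintype V] (f : V → Fin 3) : ℕ := ∑ v, (f v : ℕ)

/-- The Roman domination number. -/
noncomputable def gammaR [Fintype V] (G : SimpleGraph V) : ℕ :=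
  sInf {k | ∃ f : V → Fin 3, IsRDF G f ∧ romanWeight f = k}

/-- A dominating set. -/
def IsDomSet (G : SimpleGraph V) (D : Set V) : Prop :=
  ∀ v, v ∈ D ∨ ∃ u ∈ D, G.Adj u v

/-- The domination number. -/
noncomputable def gamma [Fintype V] (G : SimpleGraph V) : ℕ :=
  sInf {k | ∃ D : Set V, IsDomSet G D ∧ D.ncard = k}

/-- The generalized Sierpiński graph `S(G,t)` on words of length `t` over `V`. -/
def sierpinski (G : SimpleGraph V) (t : ℕ) : SimpleGraph (Fin t → V) where
  Adj x y := ∃ i : Fin t, (∀ j, j < i → x j = y j) ∧ G.Adj (x i) (y i) ∧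
    (∀ j, i < j → x j = y i ∧ y j = x i)
  symm := ⟨by
    rintro x y ⟨i, h1, h2, h3⟩
    exact ⟨i, fun j hj => (h1 j hj).symm, h2.symm, fun j hj => ⟨(h3 j hj).2, (h3 j hj).1⟩⟩⟩
  loopless := ⟨by
    rintro x ⟨i, -, h2, -⟩
    exact G.irrefl h2⟩

/-!
Write a vertex of `S(G, s + 2)` as `p a b` with `p ∈ V^s` and call the `n²` vertices with prefix
`p` a block: a copy of `S(G, 2)` whose non-extreme vertices `p a b` (`a ≠ b`) have all their
neighbours inside the block. Fix a Roman dominating function `f`. A row `p a ·` of a block must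
dominate the non-neighbours of `a`, so it carries weight at least `2` unless `a` has degree
`≥ n - 2`, and at least `3` if moreover `f (p a a) = 2`. As at most one vertex has large degree,
a block carries weight at least `2n - 1 + (#extreme 2's) - (#extreme 0's not dominated in their
row)`. An extreme `0` not dominated in its row is dominated by an extreme `2` of another block,
and an extreme vertex has at most one extreme neighbour, so summing over the `n^s` blocks the
correction terms add up to something nonnegative.
-/

open Finset

namespace Sierpinski

/-- The edge `{w u v^r, w v u^r}` of `S(G, m)` with `w` of length `i`. -/
def AdjAt (G : SimpleGraph V) {m : ℕ} (x y : Fin m → V) (i : Fin m) : Prop :=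
  (∀ j, j < i → x j = y j) ∧ G.Adj (x i) (y i) ∧ ∀ j, i < j → x j = y i ∧ y j = x i

theorem adj_iff {G : SimpleGraph V} {m : ℕ} {x y : Fin m → V} :
    (sierpinski G m).Adj x y ↔ ∃ i, AdjAt G x y i :=
  Iff.rfl

section AdjAt

variable {G : SimpleGraph V} {m : ℕ} {x x' y : Fin (m + 1) → V} {i i' : Fin (m + 1)}

/-- The tail of `y` after position `i` is constant, equal to `x i ≠ y i`. -/
theorem AdjAt.le_of_lt_last (h : AdjAt G x y i) (h' : AdjAt G x' y i') (hi : i < Fin.last m)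
    (hi' : i' < Fin.last m) : i ≤ i' := by
  by_contra! hlt
  have hx : x i = y i := by
    rw [← (h.2.2 _ hi).2, (h'.2.2 _ hi').2, (h'.2.2 _ hlt).2]
  exact G.irrefl (hx ▸ h.2.1)

theorem AdjAt.eq_of_lt_last (h : AdjAt G x y i) (h' : AdjAt G x' y i') (hi : i < Fin.last m)
    (hi' : i' < Fin.last m) : x = x' := by
  obtain rfl : i = i' := (h.le_of_lt_last h' hi hi').antisymm (h'.le_of_lt_last h hi' hi)
  funext j
  rcases lt_trichotomy j i with hj | rfl | hj
  · exact (h.1 j hj).trans (h'.1 j hj).symm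
  · exact (h.2.2 _ hi).2.symm.trans (h'.2.2 _ hi).2
  · exact (h.2.2 j hj).1.trans (h'.2.2 j hj).1.symm

theorem AdjAt.init_eq (h : AdjAt G x y (Fin.last m)) : Fin.init y = Fin.init x :=
  funext fun j => (h.1 _ (Fin.castSucc_lt_last j)).symm

end AdjAt

def word {s : ℕ} (p : Fin s → V) (a b : V) : Fin (s + 2) → V :=
  Fin.snoc (Fin.snoc p a) b

section word

variable {G : SimpleGraph V} {s : ℕ} {p p' q : Fin s → V} {a a' b b' d : V}
  {y : Fin (s + 2) → V}

@[simp]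
theorem word_last : word p a b (Fin.last (s + 1)) = b :=
  Fin.snoc_last _ _

@[simp]
theorem word_castSucc_last : word p a b (Fin.last s).castSucc = a := by
  simp [word]

@[simp]
theorem word_castSucc_castSucc (j : Fin s) : word p a b j.castSucc.castSucc = p j := by
  simp [word]

@[simp]
theorem init_word : Fin.init (word p a b) = Fin.snoc p a :=
  Fin.init_snoc _ _

@[simp]
theorem word_inj : word p a b = word p' a' b' ↔ p = p' ∧ a = a' ∧ b = b' := by
  refine ⟨fun h => ⟨funext fun j => ?_, ?_, ?_⟩, fun ⟨hp, ha, hb⟩ => by rw [hp, ha, hb]⟩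
  · simpa using congrFun h j.castSucc.castSucc
  · simpa using congrFun h (Fin.last s).castSucc
  · simpa using congrFun h (Fin.last (s + 1))

theorem word_init_init (y : Fin (s + 2) → V) :
    word (Fin.init (Fin.init y)) (y (Fin.last s).castSucc) (y (Fin.last (s + 1))) = y := by
  change Fin.snoc (Fin.snoc (Fin.init (Fin.init y)) (Fin.init y (Fin.last s))) _ = y
  rw [Fin.snoc_init_self, Fin.snoc_init_self]

def wordEquiv (s : ℕ) : (Fin s → V) × V × V ≃ (Fin (s + 2) → V) where
  toFun z := word z.1 z.2.1 z.2.2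
  invFun y := (Fin.init (Fin.init y), y (Fin.last s).castSucc, y (Fin.last (s + 1)))
  left_inv z := by simp
  right_inv := word_init_init

theorem adjAt_word_last
    (h : AdjAt G (word p a b) y (Fin.last (s + 1))) :
    G.Adj b (y (Fin.last (s + 1))) ∧ y = word p a (y (Fin.last (s + 1))) := by
  refine ⟨by simpa using h.2.1, ?_⟩
  have hy := Fin.snoc_init_self y
  rw [h.init_eq, init_word] at hy
  exact hy.symm

theorem AdjAt.init_init_eq
    (h : AdjAt G (word p a b) y i) (hi : (Fin.last s).castSucc ≤ i) :
    Fin.init (Fin.init y) = p :=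
  funext fun j => by
    have hj := (Fin.castSucc_lt_castSucc_iff.2 (Fin.castSucc_lt_last j)).trans_le hi
    simpa [Fin.init] using (h.1 _ hj).symm

theorem adjAt_word_castSucc_last
    (h : AdjAt G (word p a b) y (Fin.last s).castSucc) : G.Adj a b ∧ y = word p b a := by
  obtain ⟨hb, ha⟩ := h.2.2 _ (Fin.castSucc_lt_last (Fin.last s))
  simp only [word_last, word_castSucc_last] at hb ha
  refine ⟨by simpa [hb] using h.2.1, ?_⟩
  rw [← word_init_init y, h.init_init_eq le_rfl, ← hb, ha]

theorem adjAt_word_of_lt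
    (h : AdjAt G (word p a b) y i) (hi : i < (Fin.last s).castSucc) :
    a = b ∧ ∃ q d, y = word q d d := by
  obtain ⟨ha, ha'⟩ := h.2.2 _ hi
  obtain ⟨hb, hb'⟩ := h.2.2 _ (hi.trans (Fin.castSucc_lt_last _))
  simp only [word_last, word_castSucc_last] at ha ha' hb hb'
  exact ⟨ha.trans hb.symm, _, _, (word_init_init y).symm.trans (by rw [ha', hb'])⟩

theorem adj_word
    (h : (sierpinski G (s + 2)).Adj (word p a b) y) :
    (∃ c, G.Adj b c ∧ y = word p a c) ∨ (G.Adj a b ∧ y = word p b a) ∨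
      (a = b ∧ ∃ q d, y = word q d d) := by
  obtain ⟨i, hi⟩ := adj_iff.1 h
  rcases lt_trichotomy i (Fin.last s).castSucc with hlt | rfl | hgt
  · exact .inr (.inr (adjAt_word_of_lt hi hlt))
  · exact .inr (.inl (adjAt_word_castSucc_last hi))
  · obtain rfl : i = Fin.last (s + 1) := Fin.ext (by
      have := i.isLt
      simp only [Fin.lt_def, Fin.val_castSucc, Fin.val_last] at hgt ⊢
      omega)
    exact .inl ⟨_, adjAt_word_last hi⟩

theorem lt_last_of_adjAt_word
    (h : AdjAt G (word p a a) (word q d d) i) : i < Fin.last (s + 1) := by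
  refine Fin.lt_last_iff_ne_last.2 fun hi => ?_
  subst hi
  obtain ⟨hadj, hy⟩ := adjAt_word_last h
  simp only [word_last, word_inj] at hadj hy
  exact G.irrefl (hy.2.1 ▸ hadj)

theorem eq_of_adj_word_of_adj_word
    (h : (sierpinski G (s + 2)).Adj (word p a a) (word q d d))
    (h' : (sierpinski G (s + 2)).Adj (word p' a' a') (word q d d)) : p = p' ∧ a = a' := by
  obtain ⟨i, hi⟩ := adj_iff.1 h
  obtain ⟨i', hi'⟩ := adj_iff.1 h'
  have := hi.eq_of_lt_last hi' (lt_last_of_adjAt_word hi) (lt_last_of_adjAt_word hi')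
  exact (word_inj.1 this).imp_right And.left

end word

end Sierpinski

def HasTwoNeighbor (G : SimpleGraph V) (h : V → Fin 3) (v : V) : Prop :=
  ∃ u, G.Adj u v ∧ h u = 2

/-- `g a b` stands for the value at the vertex `p a b` of a fixed block `p` of `S(G, s + 2)`. -/
def IsBlockRDF (G : SimpleGraph V) (g : V → V → Fin 3) : Prop :=
  ∀ a b, a ≠ b → g a b = 0 → HasTwoNeighbor G (g a) b ∨ (G.Adj a b ∧ g b a = 2)

section Weight

variable [Fintype V]

theorem add_le_romanWeight {h : V → Fin 3} {u v : V} (huv : u ≠ v) {k l : ℕ}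
    (hu : k ≤ h u) (hv : l ≤ h v) : k + l ≤ romanWeight h := by
  classical
  calc k + l ≤ ∑ w ∈ {u, v}, (h w : ℕ) := by rw [sum_pair huv]; omega
    _ ≤ romanWeight h := sum_le_sum_of_subset (subset_univ _)

theorem le_romanWeight {h : V → Fin 3} {v : V} {k : ℕ} (hv : k ≤ h v) : k ≤ romanWeight h :=
  hv.trans (single_le_sum (f := fun w => (h w : ℕ)) (fun _ _ => Nat.zero_le _) (mem_univ v))

theorem one_le_val_of_ne_zero {n : ℕ} [NeZero n] {x : Fin n} (hx : x ≠ 0) : 1 ≤ (x : ℕ) :=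
  Nat.one_le_iff_ne_zero.2 (Fin.val_ne_zero_iff.2 hx)

open Classical in
theorem one_add_le_romanWeight (G : SimpleGraph V) (h : V → Fin 3) (a : V) :
    1 + (if h a = 2 then 1 else 0) ≤
      romanWeight h + if h a = 0 ∧ ¬HasTwoNeighbor G h a then 1 else 0 := by
  by_cases hext : h a = 0 ∧ ¬HasTwoNeighbor G h a
  · simp [hext.1, hext.2]
  rw [if_neg hext, add_zero]
  by_cases ha2 : h a = 2
  · rw [if_pos ha2]
    exact le_romanWeight (v := a) (by simp [ha2])
  rw [if_neg ha2, add_zero]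
  by_cases ha0 : h a = 0
  · obtain ⟨u, -, hu⟩ := not_not.1 fun hn => hext ⟨ha0, hn⟩
    exact le_romanWeight (v := u) (by simp [hu])
  · exact le_romanWeight (one_le_val_of_ne_zero ha0)

theorem exists_pair_not_adj (G : SimpleGraph V) {a : V}
    (ha : (G.neighborSet a).ncard < Fintype.card V - 2) :
    ∃ b₁ b₂, b₁ ≠ b₂ ∧ a ≠ b₁ ∧ a ≠ b₂ ∧ ¬G.Adj a b₁ ∧ ¬G.Adj a b₂ := by
  have hcover : (Set.univ : Set V) ⊆
      {a} ∪ G.neighborSet a ∪ {b | a ≠ b ∧ ¬G.Adj a b} := by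
    intro b _
    by_cases hab : a = b <;> by_cases hadj : G.Adj a b <;> simp_all
  have hcard := (Set.ncard_le_ncard hcover).trans
    ((Set.ncard_union_le _ _).trans (Nat.add_le_add_right (Set.ncard_union_le _ _) _))
  rw [Set.ncard_univ, Nat.card_eq_fintype_card, Set.ncard_singleton] at hcard
  obtain ⟨b₁, b₂, ⟨hab₁, hn₁⟩, ⟨hab₂, hn₂⟩, hb⟩ :=
    (Set.one_lt_ncard_iff (s := {b | a ≠ b ∧ ¬G.Adj a b}) (Set.toFinite _)).1
      (by omega)
  exact ⟨b₁, b₂, hb, hab₁, hab₂, hn₁, hn₂⟩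

theorem IsBlockRDF.two_add_le_romanWeight {G : SimpleGraph V} {g : V → V → Fin 3}
    (hg : IsBlockRDF G g) {a : V} (ha : (G.neighborSet a).ncard < Fintype.card V - 2) :
    2 + (if g a a = 2 then 1 else 0) ≤ romanWeight (g a) := by
  obtain ⟨b₁, b₂, hb, hab₁, hab₂, hn₁, hn₂⟩ := exists_pair_not_adj G ha
  have hzero : ∀ b, a ≠ b → ¬G.Adj a b → g a b = 0 → ∃ c, a ≠ c ∧ g a c = 2 := by
    intro b hab hn h0
    rcases hg a b hab h0 with ⟨c, hcb, hc⟩ | ⟨hadj, -⟩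
    · exact ⟨c, by rintro rfl; exact hn hcb, hc⟩
    · exact absurd hadj hn
  split_ifs with ha2
  · by_cases h0 : g a b₁ = 0
    · obtain ⟨c, hac, hc⟩ := hzero b₁ hab₁ hn₁ h0
      have := add_le_romanWeight (h := g a) hac (k := 2) (l := 2) (by simp [ha2]) (by simp [hc])
      omega
    · exact add_le_romanWeight (h := g a) hab₁ (by simp [ha2]) (one_le_val_of_ne_zero h0)
  · by_cases h2 : ∃ c, g a c = 2
    · obtain ⟨c, hc⟩ := h2
      exact le_romanWeight (h := g a) (v := c) (by simp [hc])
    · have hnz : ∀ b, a ≠ b → ¬G.Adj a b → g a b ≠ 0 := fun b hab hn h0 =>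
        let ⟨c, _, hc⟩ := hzero b hab hn h0
        h2 ⟨c, hc⟩
      have := add_le_romanWeight hb (one_le_val_of_ne_zero (hnz b₁ hab₁ hn₁))
        (one_le_val_of_ne_zero (hnz b₂ hab₂ hn₂))
      omega

open Classical in
theorem IsBlockRDF.two_mul_card_add_le_sum_romanWeight {G : SimpleGraph V} {g : V → V → Fin 3}
    (hg : IsBlockRDF G g)
    (hdeg : ∀ u v : V, Fintype.card V - 2 ≤ (G.neighborSet u).ncard →
      Fintype.card V - 2 ≤ (G.neighborSet v).ncard → u = v) :
    2 * Fintype.card V + #{a | g a a = 2} ≤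
      ∑ a, romanWeight (g a) + #{a | g a a = 0 ∧ ¬HasTwoNeighbor G (g a) a} + 1 := by
  have hvertex : ∀ a, 2 + (if g a a = 2 then 1 else 0) ≤
      romanWeight (g a) + (if g a a = 0 ∧ ¬HasTwoNeighbor G (g a) a then 1 else 0) +
        if Fintype.card V - 2 ≤ (G.neighborSet a).ncard then 1 else 0 := by
    intro a
    by_cases hhigh : Fintype.card V - 2 ≤ (G.neighborSet a).ncard
    · rw [if_pos hhigh]
      have := one_add_le_romanWeight G (g a) a
      omega
    · rw [if_neg hhigh, add_zero]
      exact (hg.two_add_le_romanWeight (not_le.1 hhigh)).trans (Nat.le_add_right _ _)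
  have hhigh : #{a | Fintype.card V - 2 ≤ (G.neighborSet a).ncard} ≤ 1 :=
    card_le_one.2 fun u hu v hv => hdeg u v (mem_filter.1 hu).2 (mem_filter.1 hv).2
  have hsum := sum_le_sum fun a (_ : a ∈ univ) => hvertex a
  simp only [sum_add_distrib, ← card_filter, sum_const, card_univ, smul_eq_mul] at hsum
  omega

theorem exists_isRDF_romanWeight_eq_gammaR (G : SimpleGraph V) :
    ∃ f, IsRDF G f ∧ romanWeight f = gammaR G := by
  refine Nat.sInf_mem (s := {k | ∃ f, IsRDF G f ∧ romanWeight f = k}) ?_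
  exact ⟨_, fun _ => 1, fun _ h => absurd h one_ne_zero, rfl⟩

end Weight

namespace Sierpinski

variable {G : SimpleGraph V} {s : ℕ} {f : (Fin (s + 2) → V) → Fin 3}

theorem isBlockRDF_word (hf : IsRDF (sierpinski G (s + 2)) f) (p : Fin s → V) :
    IsBlockRDF G fun a b => f (word p a b) := by
  intro a b hab h0
  obtain ⟨y, hy, hy2⟩ := hf _ h0
  rcases adj_word hy.symm with ⟨c, hbc, rfl⟩ | ⟨hadj, rfl⟩ | ⟨heq, -⟩
  · exact .inl ⟨c, hbc.symm, hy2⟩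
  · exact .inr ⟨hadj, hy2⟩
  · exact absurd heq hab

theorem exists_adj_word_self (hf : IsRDF (sierpinski G (s + 2)) f) {p : Fin s → V} {a : V}
    (h0 : f (word p a a) = 0) (hrow : ¬HasTwoNeighbor G (fun c => f (word p a c)) a) :
    ∃ q d, (sierpinski G (s + 2)).Adj (word p a a) (word q d d) ∧ f (word q d d) = 2 := by
  obtain ⟨y, hy, hy2⟩ := hf _ h0
  rcases adj_word hy.symm with ⟨c, hac, rfl⟩ | ⟨haa, -⟩ | ⟨-, q, d, rfl⟩
  · exact (hrow ⟨c, hac.symm, hy2⟩).elim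
  · exact absurd haa (G.irrefl)
  · exact ⟨q, d, hy.symm, hy2⟩

open Classical in
theorem card_extreme_zero_le_card_extreme_two [Fintype V]
    (hf : IsRDF (sierpinski G (s + 2)) f) :
    #{x : (Fin s → V) × V | f (word x.1 x.2 x.2) = 0 ∧
        ¬HasTwoNeighbor G (fun c => f (word x.1 x.2 c)) x.2} ≤
      #{x : (Fin s → V) × V | f (word x.1 x.2 x.2) = 2} :=
  card_le_card_of_forall_subsingleton
    (fun x y => (sierpinski G (s + 2)).Adj (word x.1 x.2 x.2) (word y.1 y.2 y.2))
    (fun x hx => by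
      obtain ⟨-, h0, hrow⟩ := mem_filter.1 hx
      obtain ⟨q, d, hadj, h2⟩ := exists_adj_word_self hf h0 hrow
      exact ⟨(q, d), mem_filter.2 ⟨mem_univ _, h2⟩, hadj⟩)
    (fun _ _ _ hx₁ _ hx₂ => Prod.ext_iff.2 (eq_of_adj_word_of_adj_word hx₁.2 hx₂.2))

theorem pow_mul_le_romanWeight [Fintype V]
    (hdeg : ∀ u v : V, Fintype.card V - 2 ≤ (G.neighborSet u).ncard →
      Fintype.card V - 2 ≤ (G.neighborSet v).ncard → u = v)
    (hf : IsRDF (sierpinski G (s + 2)) f) :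
    Fintype.card V ^ s * (2 * Fintype.card V - 1) ≤ romanWeight f := by
  classical
  have hweight : romanWeight f = ∑ p, ∑ a, romanWeight fun b => f (word p a b) := by
    rw [romanWeight, ← (wordEquiv s).sum_comp]
    simp only [Fintype.sum_prod_type]
    rfl
  have hblocks := sum_le_sum fun p (_ : p ∈ univ) =>
    (isBlockRDF_word hf p).two_mul_card_add_le_sum_romanWeight hdeg
  have hext := card_extreme_zero_le_card_extreme_two hf
  simp only [card_filter, Fintype.sum_prod_type] at hext
  simp only [sum_add_distrib, card_filter, sum_const, card_univ, Fintype.card_fun,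
    Fintype.card_fin, smul_eq_mul] at hblocks
  rw [hweight, Nat.mul_sub_one]
  omega

end Sierpinski

theorem stmt12_general [Fintype V] (G : SimpleGraph V) (n : ℕ) (hn : Fintype.card V = n)
    (hdeg : ∀ u v : V, n - 2 ≤ (G.neighborSet u).ncard →
      n - 2 ≤ (G.neighborSet v).ncard → u = v)
    (t : ℕ) (ht : 2 ≤ t) :
    n ^ (t - 2) * (2 * n - 1) ≤ gammaR (sierpinski G t) := by
  obtain ⟨s, rfl⟩ : ∃ s, t = s + 2 := ⟨t - 2, by omega⟩
  obtain ⟨f, hf, hweight⟩ := exists_isRDF_romanWeight_eq_gammaR (sierpinski G (s + 2))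
  subst hn
  rw [← hweight, Nat.add_sub_cancel]
  exact Sierpinski.pow_mul_le_romanWeight hdeg hf

theorem stmt12 [Fintype V] (G : SimpleGraph V) (n : ℕ) (hn : Fintype.card V = n)
    (hn4 : 4 ≤ n)
    (hdeg : ∀ u v : V, n - 2 ≤ (G.neighborSet u).ncard →
      n - 2 ≤ (G.neighborSet v).ncard → u = v)
    (t : ℕ) (ht : 2 ≤ t) :
    n ^ (t - 2) * (2 * n - 1) ≤ gammaR (sierpinski G t) :=
  stmt12_general G n hn hdeg t ht
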